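/- The geometric loop does not reach its output distribution: consider the loop while(c=1){ {x:=x+1}[1/2]{c:=c−1} } with initial distribution δ_{(x=0,c=1)}. The reachable distributions are exactly { μ_i | i ∈ ℕ } where μ_i assigns probability 2^{−(j+1)} to (x=j, c=0) for 0 ≤ j < i and probability 2^{−i} to (x=i, c=1); in particular, the output distribution μ_geo assigning 2^{−(j+1)} to (x=j, c=0) for all j ∈ ℕ is not among the reachable distributions, but μ_geo = sup_i ([c≠1]·μ_i). -/
import Mathlib


open scoped ENNReal Classical

noncomputable section

abbrev PState (V : Type) := V → ℤ
abbrev SubDist (S : Type) := S → ℝ≥0∞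

/-- Total mass of a sub-distribution. -/
def mass {S : Type} (μ : SubDist S) : ℝ≥0∞ := ∑' s, μ s

/-- Dirac (point) distribution. -/
def dirac {S : Type} (σ : S) : SubDist S := Set.indicator {σ} (fun _ => 1)

/-- Action of a Markov chain (given by its transition function) on sub-distributions. -/
def mcStep {S : Type} (P : S → SubDist S) (μ : SubDist S) : SubDist S :=
  fun s' => ∑' s, μ s * P s s'

/-- One guarded iteration of the geometric loop `while (c = 1) { {x:=x+1} [1/2] {c:=c-1} }`
as a Markov kernel on pairs (x, c). -/
def geoKernel : ℤ × ℤ → SubDist (ℤ × ℤ) := fun s =>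
  if s.2 = 1 then
    fun t => (if t = (s.1 + 1, s.2) then (2 : ℝ≥0∞)⁻¹ else 0)
      + (if t = (s.1, s.2 - 1) then (2 : ℝ≥0∞)⁻¹ else 0)
  else dirac s

/-- The i-th reachable distribution of the geometric loop. -/
def geoMu (i : ℕ) : SubDist (ℤ × ℤ) := fun s =>
  if 0 ≤ s.1 ∧ s.1 < (i : ℤ) ∧ s.2 = 0 then (2 : ℝ≥0∞)⁻¹ ^ (s.1.toNat + 1)
  else if s = ((i : ℤ), 1) then (2 : ℝ≥0∞)⁻¹ ^ i else 0

/-- The geometric output distribution. -/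
def geoLimit : SubDist (ℤ × ℤ) := fun s =>
  if 0 ≤ s.1 ∧ s.2 = 0 then (2 : ℝ≥0∞)⁻¹ ^ (s.1.toNat + 1) else 0

lemma mcStep_geo (μ : SubDist (ℤ × ℤ)) (s' : ℤ × ℤ) :
    mcStep geoKernel μ s' =
      (if s'.2 = 1 then μ (s'.1 - 1, 1) * 2⁻¹ else 0)
      + (if s'.2 = 0 then μ (s'.1, 1) * 2⁻¹ else 0)
      + (if s'.2 ≠ 1 then μ s' else 0) := by
  have hdecomp : ∀ s : ℤ × ℤ, μ s * geoKernel s s' =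
      (if s.2 = 1 ∧ s' = (s.1 + 1, 1) then μ s * 2⁻¹ else 0)
      + (if s.2 = 1 ∧ s' = (s.1, 0) then μ s * 2⁻¹ else 0)
      + (if s.2 ≠ 1 ∧ s' = s then μ s else 0) := by
    intro s
    by_cases h : s.2 = 1
    · simp only [geoKernel, h, if_pos]
      have h0 : (1 : ℤ) - 1 = 0 := by ring
      simp [h, h0, mul_add, mul_ite]
    · have hk : geoKernel s s' = if s' = s then 1 else 0 := by
        simp [geoKernel, h, dirac, Set.indicator_apply]
      rw [hk]
      simp only [h, false_and, if_false, zero_add, ne_eq, not_false_eq_true, true_and]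
      split_ifs <;> simp
  unfold mcStep
  simp only [hdecomp]
  rw [ENNReal.tsum_add, ENNReal.tsum_add]
  congr 1
  · congr 1
    · rw [tsum_eq_single (s'.1 - 1, 1)]
      · by_cases h : s'.2 = 1
        · have h2 : s' = (s'.1 - 1 + 1, 1) := Prod.ext_iff.mpr ⟨by ring, h⟩
          rw [if_pos ⟨rfl, h2⟩, if_pos h]
        · rw [if_neg, if_neg h]
          rintro ⟨_, h2⟩
          exact h (by rw [h2])
      · intro b hb
        rw [if_neg]
        rintro ⟨h1, h2⟩
        apply hb
        have hf := congrArg Prod.fst h2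
        exact Prod.ext_iff.mpr ⟨by simp at hf ⊢; omega, h1⟩
    · rw [tsum_eq_single (s'.1, 1)]
      · by_cases h : s'.2 = 0
        · have h2 : s' = ((s'.1, (1:ℤ)).1, 0) := Prod.ext_iff.mpr ⟨rfl, h⟩
          rw [if_pos ⟨rfl, h2⟩, if_pos h]
        · rw [if_neg, if_neg h]
          rintro ⟨_, h2⟩
          exact h (by rw [h2])
      · intro b hb
        rw [if_neg]
        rintro ⟨h1, h2⟩
        apply hb
        have hf := congrArg Prod.fst h2
        exact Prod.ext_iff.mpr ⟨by simp at hf ⊢; omega, h1⟩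
  · rw [tsum_eq_single s']
    · by_cases h : s'.2 = 1
      · rw [if_neg (by simp [h]), if_neg (by simp [h])]
      · rw [if_pos ⟨h, rfl⟩, if_pos h]
    · intro b hb
      rw [if_neg]
      rintro ⟨h1, h2⟩
      exact hb h2.symm

lemma geoMu_zero : dirac ((0 : ℤ), (1 : ℤ)) = geoMu 0 := by
  funext s
  by_cases h : s = ((0:ℤ), (1:ℤ))
  · subst h; simp [dirac, geoMu]
  · rw [show dirac ((0:ℤ), (1:ℤ)) s = 0 from Set.indicator_of_notMem (by simpa using h) _]
    simp only [geoMu, Nat.cast_zero, pow_zero]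
    rw [if_neg (by rintro ⟨a, b, _⟩; omega), if_neg h]

lemma geoMu_succ (i : ℕ) : mcStep geoKernel (geoMu i) = geoMu (i + 1) := by
  funext s
  rcases s with ⟨x, c⟩
  rw [mcStep_geo]
  simp only [geoMu, Prod.mk.injEq, ne_eq]
  split_ifs <;> push_cast at * <;> try omega
  all_goals simp_all [pow_succ]
  all_goals omega

/-- the reachable distributions of the geometric loop are exactly the `geoMu i`;
the geometric output distribution is not among them, but is the pointwise supremum of their
guard-filtered versions. -/
theorem geometric_output_not_reachable :
    (∀ i : ℕ, (mcStep geoKernel)^[i] (dirac ((0 : ℤ), (1 : ℤ))) = geoMu i) ∧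
    (∀ i : ℕ, geoLimit ≠ geoMu i) ∧
    geoLimit = fun s => ⨆ i : ℕ, {t : ℤ × ℤ | t.2 ≠ 1}.indicator (geoMu i) s := by
  refine ⟨?_, ?_, ?_⟩
  · intro i
    induction i with
    | zero => simpa using geoMu_zero
    | succ n ih => rw [Function.iterate_succ_apply', ih, geoMu_succ]
  · intro i h
    have h2 := congrFun h ((i : ℤ), 1)
    simp only [geoLimit, geoMu] at h2
    rw [if_neg (by rintro ⟨_, hb⟩; exact one_ne_zero hb),
      if_neg (by rintro ⟨_, _, hb⟩; exact one_ne_zero hb)] at h2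
    exact pow_ne_zero i (by norm_num) h2.symm
  · funext s
    rcases s with ⟨x, c⟩
    by_cases hc1 : c = 1
    · subst hc1
      have hz : ∀ i : ℕ, ({t : ℤ × ℤ | t.2 ≠ 1}.indicator (geoMu i) (x, 1)) = 0 := by
        intro i
        apply Set.indicator_of_notMem
        simp
      simp only [hz, geoLimit]
      rw [if_neg (by rintro ⟨_, hb⟩; exact one_ne_zero hb)]
      simp
    · have hind : ∀ i : ℕ, ({t : ℤ × ℤ | t.2 ≠ 1}.indicator (geoMu i) (x, c)) = geoMu i (x, c) := by
        intro i
        apply Set.indicator_of_mem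
        simpa using hc1
      simp only [hind]
      have hne : ∀ i : ℕ, ((x, c) : ℤ × ℤ) ≠ ((i : ℤ), 1) := by
        intro i hc; exact hc1 (by simpa using congrArg Prod.snd hc)
      by_cases h : 0 ≤ x ∧ c = 0
      · have hval : geoLimit (x, c) = 2⁻¹ ^ (x.toNat + 1) := by
          simp only [geoLimit]; rw [if_pos h]
        rw [hval]
        apply le_antisymm
        · have hv : geoMu (x.toNat + 1) (x, c) = 2⁻¹ ^ (x.toNat + 1) := by
            simp only [geoMu]
            rw [if_pos ⟨h.1, by push_cast; omega, h.2⟩]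
          rw [← hv]
          exact le_iSup (fun i => geoMu i (x, c)) (x.toNat + 1)
        · apply iSup_le
          intro i
          simp only [geoMu]
          rw [if_neg (hne i)]
          split_ifs <;> simp
      · have hval : geoLimit (x, c) = 0 := by
          simp only [geoLimit]; rw [if_neg h]
        rw [hval]
        symm
        simp only [ENNReal.iSup_eq_zero]
        intro i
        simp only [geoMu]
        rw [if_neg (by rintro ⟨a, _, b⟩; exact h ⟨a, b⟩), if_neg (hne i)]

end
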